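/- arXiv:2008.13633 — 2 statements merged into one kernel-verified Lean document; each statement's English description precedes it below -/
import Mathlib

section
/- Fix ε ∈ (0, 1/3), a point x₀ ∈ ℝ^n, r > 0, a d-dimensional linear subspace T of ℝ^n, and let A = (T + B(0, εr)) ∩ B(x₀, (1−2ε)r) (where T is translated to pass through x₀). Define φ : ℝ^n → ℝ^n by φ(x) = x − η(dist(x, A)/r)·P⊥(x − x₀), where P⊥ is the orthogonal projection onto the orthogonal complement of T and η(t) = max(0, min(1, 1 − t/ε)). Then φ is Lipschitz with Lipschitz constant at most 4, φ(B(x₀, r)) ⊆ B(x₀, r), and φ(x) = x for x outside B(x₀, r). -/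
/-!
Write `c x = η(dist(x, A)/r)`. As a function of `x`, `c` is `1/(εr)`-Lipschitz with values in
`[0, 1]`, and it vanishes unless `dist(x, A) < εr`, where `|P⊥(x - x₀)| ≤ 2εr`. Hence the three
terms of `φ x - φ y = (x - y) - (c x - c y) P⊥(x - x₀) - c y P⊥(x - y)` have norms at most
`|x - y|`, `2|x - y|` and `|x - y|`. Since `φ x - x₀` is a convex combination of `x - x₀` and its
projection onto `T`, `φ` does not increase the distance to `x₀`; and `φ` is the identity outside
the ball because `A` lies in the smaller ball `B(x₀, (1 - 2ε)r)`.
-/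

open MeasureTheory Filter Topology Set Metric Pointwise

/-- The orthogonal projection onto the orthogonal complement of `T`,
as a map `ℝⁿ → ℝⁿ`. -/
noncomputable def projPerp {n : ℕ} (T : Submodule ℝ (EuclideanSpace ℝ (Fin n))) :
    EuclideanSpace ℝ (Fin n) →L[ℝ] EuclideanSpace ℝ (Fin n) :=
  Tᗮ.subtypeL.comp (Submodule.orthogonalProjectionOnto Tᗮ)

noncomputable def cutoff (ε t : ℝ) : ℝ := max 0 (min 1 (1 - t / ε))

lemma cutoff_mem_Icc (ε t : ℝ) : cutoff ε t ∈ Icc 0 1 :=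
  ⟨le_max_left _ _, max_le zero_le_one (min_le_left _ _)⟩

lemma abs_cutoff_le_one (ε t : ℝ) : |cutoff ε t| ≤ 1 :=
  abs_le.mpr ⟨by linarith [(cutoff_mem_Icc ε t).1], (cutoff_mem_Icc ε t).2⟩

lemma cutoff_eq_zero {ε t : ℝ} (hε : 0 < ε) (ht : ε ≤ t) : cutoff ε t = 0 :=
  max_eq_left <| (min_le_right _ _).trans <| by
    linarith [(one_le_div hε).mpr ht]

lemma lt_of_cutoff_ne_zero {ε t : ℝ} (hε : 0 < ε) (h : cutoff ε t ≠ 0) : t < ε :=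
  lt_of_not_ge fun ht => h (cutoff_eq_zero hε ht)

lemma cutoff_div (ε r t : ℝ) : cutoff ε (t / r) = cutoff (ε * r) t := by
  rw [cutoff, cutoff, div_div, mul_comm r]

lemma lipschitzWith_cutoff {ε : ℝ} (hε : 0 < ε) :
    LipschitzWith (Real.toNNReal ε)⁻¹ (cutoff ε) := by
  have hlin : LipschitzWith (Real.toNNReal ε)⁻¹ fun t : ℝ => 1 - t / ε :=
    LipschitzWith.of_dist_le_mul fun s t => by
      rw [Real.dist_eq, Real.dist_eq, NNReal.coe_inv, Real.coe_toNNReal _ hε.le,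
        show 1 - s / ε - (1 - t / ε) = -((s - t) / ε) by ring, abs_neg, abs_div, abs_of_pos hε]
      exact (div_eq_inv_mul _ _).le
  exact (hlin.const_min 1).const_max 0

lemma LipschitzWith.lt_add_of_infDist_lt {α : Type*} [PseudoMetricSpace α] {f : α → ℝ}
    (hf : LipschitzWith 1 f) {s : Set α} (hs : s.Nonempty) {ρ δ : ℝ} (hρ : ∀ a ∈ s, f a ≤ ρ)
    {x : α} (hx : infDist x s < δ) : f x < ρ + δ := by
  obtain ⟨a, ha, hxa⟩ := (infDist_lt_iff hs).mp hx
  have := hf.le_add_mul x a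
  rw [NNReal.coe_one, one_mul] at this
  linarith [hρ a ha]

lemma LipschitzWith.id_sub_smul {E : Type*} [SeminormedAddCommGroup E] [NormedSpace ℝ E]
    {c : E → ℝ} {v : E → E} {K M : NNReal} (hc : LipschitzWith K c) (hc_le : ∀ x, |c x| ≤ 1)
    (hv : LipschitzWith 1 v) (hvM : ∀ x, c x ≠ 0 → ‖v x‖ ≤ M) :
    LipschitzWith (2 + K * M) fun x => x - c x • v x := by
  have hsupp : ∀ x y, c x ≠ 0 →
      dist (x - c x • v x) (y - c y • v y) ≤ (2 + K * M) * dist x y := by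
    intro x y hx
    have hcxy : |c x - c y| ≤ K * dist x y := by
      simpa only [Real.dist_eq] using hc.dist_le_mul x y
    have hvxy : ‖v x - v y‖ ≤ dist x y := by
      simpa only [dist_eq_norm, NNReal.coe_one, one_mul] using hv.dist_le_mul x y
    have hterm₁ : ‖(c x - c y) • v x‖ ≤ K * M * dist x y :=
      calc ‖(c x - c y) • v x‖ = |c x - c y| * ‖v x‖ := by rw [norm_smul, Real.norm_eq_abs]
        _ ≤ K * dist x y * M := mul_le_mul hcxy (hvM x hx) (norm_nonneg _) (by positivity)
        _ = K * M * dist x y := by ring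
    have hterm₂ : ‖c y • (v x - v y)‖ ≤ dist x y := by
      rw [norm_smul, Real.norm_eq_abs]
      exact (mul_le_mul (hc_le y) hvxy (norm_nonneg _) zero_le_one).trans_eq (one_mul _)
    calc dist (x - c x • v x) (y - c y • v y)
        = ‖(x - y) - (c x - c y) • v x - c y • (v x - v y)‖ := by
          rw [dist_eq_norm]; congr 1; module
      _ ≤ ‖x - y‖ + ‖(c x - c y) • v x‖ + ‖c y • (v x - v y)‖ :=
          (_root_.norm_sub_le _ _).trans (add_le_add_left (_root_.norm_sub_le _ _) _)
      _ ≤ (2 + K * M) * dist x y := by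
          rw [← dist_eq_norm]; linarith
  refine LipschitzWith.of_dist_le_mul fun x y => ?_
  by_cases hx : c x = 0
  · by_cases hy : c y = 0
    · have hK : (1 : ℝ) ≤ (2 + K * M : NNReal) := by
        push_cast; exact le_add_of_le_of_nonneg one_le_two (by positivity)
      simpa only [hx, hy, zero_smul, sub_zero] using le_mul_of_one_le_left dist_nonneg hK
    · rw [dist_comm, dist_comm x]
      exact hsupp y x hy
  · exact hsupp x y hx

lemma norm_sub_smul_le_of_norm_sub_le {E : Type*} [SeminormedAddCommGroup E] [NormedSpace ℝ E]
    {z p : E} {c : ℝ} (hc : c ∈ Icc 0 1) (hp : ‖z - p‖ ≤ ‖z‖) : ‖z - c • p‖ ≤ ‖z‖ :=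
  calc ‖z - c • p‖ = ‖(1 - c) • z + c • (z - p)‖ := by congr 1; module
    _ ≤ (1 - c) * ‖z‖ + c * ‖z - p‖ := by
        refine (norm_add_le _ _).trans_eq ?_
        rw [norm_smul, norm_smul, Real.norm_of_nonneg (sub_nonneg.mpr hc.2),
          Real.norm_of_nonneg hc.1]
    _ ≤ ‖z‖ := by nlinarith [hc.1]

lemma lipschitzWith_id_sub_cutoff_infDist_smul {E : Type*} [SeminormedAddCommGroup E]
    [NormedSpace ℝ E] {s : Set E} {v : E → E} {δ : ℝ} (hδ : 0 < δ) (hv : LipschitzWith 1 v)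
    (hvs : ∀ x, infDist x s < δ → ‖v x‖ ≤ 2 * δ) :
    LipschitzWith 4 fun x => x - cutoff δ (infDist x s) • v x := by
  set δ' := Real.toNNReal δ
  have hc : LipschitzWith δ'⁻¹ fun x => cutoff δ (infDist x s) :=
    mul_one δ'⁻¹ ▸ (lipschitzWith_cutoff hδ).comp (lipschitz_infDist_pt s)
  have h4 : (4 : NNReal) = 2 + δ'⁻¹ * (δ' * 2) := by
    rw [inv_mul_cancel_left₀ (Real.toNNReal_pos.mpr hδ).ne']
    norm_num
  rw [h4]
  refine hc.id_sub_smul (fun x => abs_cutoff_le_one _ _) hv fun x hx => ?_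
  rw [NNReal.coe_mul, Real.coe_toNNReal _ hδ.le, NNReal.coe_two, mul_comm]
  exact hvs x (lt_of_cutoff_ne_zero hδ hx)

section projPerp

variable {n : ℕ} (T : Submodule ℝ (EuclideanSpace ℝ (Fin n)))

lemma projPerp_eq_starProjection : projPerp T = Tᗮ.starProjection := rfl

lemma norm_projPerp_apply_le (z : EuclideanSpace ℝ (Fin n)) : ‖projPerp T z‖ ≤ ‖z‖ :=
  Tᗮ.norm_starProjection_apply_le z

lemma lipschitzWith_projPerp_sub (x₀ : EuclideanSpace ℝ (Fin n)) :
    LipschitzWith 1 fun x => projPerp T (x - x₀) :=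
  LipschitzWith.of_dist_le_mul fun x y => by
    rw [dist_eq_norm, dist_eq_norm, ← map_sub, sub_sub_sub_cancel_right, NNReal.coe_one, one_mul]
    exact norm_projPerp_apply_le T _

lemma norm_sub_projPerp_le (z : EuclideanSpace ℝ (Fin n)) : ‖z - projPerp T z‖ ≤ ‖z‖ := by
  rw [projPerp_eq_starProjection, Submodule.starProjection_orthogonal_val, sub_sub_cancel]
  exact T.norm_starProjection_apply_le z

lemma norm_projPerp_sub_le_of_mem {x₀ a : EuclideanSpace ℝ (Fin n)} {ρ : ℝ}
    (ha : a ∈ (fun y => x₀ + y) '' ((T : Set (EuclideanSpace ℝ (Fin n))) + closedBall 0 ρ)) :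
    ‖projPerp T (a - x₀)‖ ≤ ρ := by
  obtain ⟨_, ⟨t, ht, b, hb, rfl⟩, rfl⟩ := ha
  rw [add_sub_cancel_left, map_add, projPerp_eq_starProjection,
    Submodule.starProjection_orthogonal_apply_eq_zero ht, zero_add]
  exact (norm_projPerp_apply_le T b).trans (mem_closedBall_zero_iff.mp hb)

lemma norm_projPerp_sub_lt_of_infDist_lt {x₀ x : EuclideanSpace ℝ (Fin n)}
    {A : Set (EuclideanSpace ℝ (Fin n))} {ρ δ : ℝ} (hne : A.Nonempty)
    (hA : A ⊆ (fun y => x₀ + y) '' ((T : Set (EuclideanSpace ℝ (Fin n))) + closedBall 0 ρ))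
    (hx : infDist x A < δ) : ‖projPerp T (x - x₀)‖ < ρ + δ := by
  have hf : LipschitzWith 1 fun y => ‖projPerp T (y - x₀)‖ :=
    mul_one (1 : NNReal) ▸ lipschitzWith_one_norm.comp (lipschitzWith_projPerp_sub T x₀)
  exact hf.lt_add_of_infDist_lt hne (fun a ha => norm_projPerp_sub_le_of_mem T (hA ha)) hx

end projPerp

theorem stmt3_general (n : ℕ) (ε r : ℝ) (hε : 0 < ε) (hε' : ε < 1 / 3) (hr : 0 < r)
    (x₀ : EuclideanSpace ℝ (Fin n))
    (T : Submodule ℝ (EuclideanSpace ℝ (Fin n)))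
    (A : Set (EuclideanSpace ℝ (Fin n)))
    (hA : A = ((fun y => x₀ + y) '' ((T : Set (EuclideanSpace ℝ (Fin n)))
        + closedBall 0 (ε * r))) ∩ closedBall x₀ ((1 - 2 * ε) * r))
    (η : ℝ → ℝ) (hη : ∀ t : ℝ, η t = max 0 (min 1 (1 - t / ε)))
    (φ : EuclideanSpace ℝ (Fin n) → EuclideanSpace ℝ (Fin n))
    (hφ : ∀ x, φ x = x - η (Metric.infDist x A / r) • projPerp T (x - x₀)) :
    LipschitzWith 4 φ ∧ φ '' closedBall x₀ r ⊆ closedBall x₀ r ∧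
      ∀ x ∉ closedBall x₀ r, φ x = x := by
  have hεr : 0 < ε * r := mul_pos hε hr
  obtain rfl : η = cutoff ε := funext hη
  simp only [cutoff_div] at hφ
  have hA_perp : A ⊆ (fun y => x₀ + y) '' ((T : Set (EuclideanSpace ℝ (Fin n)))
      + closedBall 0 (ε * r)) := hA ▸ inter_subset_left
  have hA_ball : A ⊆ closedBall x₀ ((1 - 2 * ε) * r) := hA ▸ inter_subset_right
  have hAne : A.Nonempty := ⟨x₀, hA ▸ ⟨⟨0, ⟨0, T.zero_mem, 0, mem_closedBall_self hεr.le,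
    zero_add 0⟩, add_zero x₀⟩, mem_closedBall_self (by nlinarith)⟩⟩
  refine ⟨?_, ?_, fun x hx => ?_⟩
  · rw [show φ = _ from funext hφ]
    refine lipschitzWith_id_sub_cutoff_infDist_smul hεr (lipschitzWith_projPerp_sub T x₀)
      fun x hx => ?_
    linarith [norm_projPerp_sub_lt_of_infDist_lt T hAne hA_perp hx]
  · rintro _ ⟨x, hx, rfl⟩
    rw [mem_closedBall, dist_eq_norm] at hx ⊢
    rw [hφ, sub_right_comm]
    exact (norm_sub_smul_le_of_norm_sub_le (cutoff_mem_Icc _ _)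
      (norm_sub_projPerp_le T _)).trans hx
  · suffices cutoff (ε * r) (infDist x A) = 0 by rw [hφ, this, zero_smul, sub_zero]
    refine cutoff_eq_zero hεr (le_of_not_gt fun hxA => hx (mem_closedBall.mpr ?_))
    have := (LipschitzWith.dist_left x₀).lt_add_of_infDist_lt hAne (fun a ha => hA_ball ha) hxA
    nlinarith

theorem stmt3 (n d : ℕ) (ε r : ℝ) (hε : 0 < ε) (hε' : ε < 1 / 3) (hr : 0 < r)
    (x₀ : EuclideanSpace ℝ (Fin n))
    (T : Submodule ℝ (EuclideanSpace ℝ (Fin n))) (hT : Module.finrank ℝ T = d)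
    (A : Set (EuclideanSpace ℝ (Fin n)))
    (hA : A = ((fun y => x₀ + y) '' ((T : Set (EuclideanSpace ℝ (Fin n)))
        + closedBall 0 (ε * r))) ∩ closedBall x₀ ((1 - 2 * ε) * r))
    (η : ℝ → ℝ) (hη : ∀ t : ℝ, η t = max 0 (min 1 (1 - t / ε)))
    (φ : EuclideanSpace ℝ (Fin n) → EuclideanSpace ℝ (Fin n))
    (hφ : ∀ x, φ x = x - η (Metric.infDist x A / r) • projPerp T (x - x₀)) :
    LipschitzWith 4 φ ∧ φ '' closedBall x₀ r ⊆ closedBall x₀ r ∧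
      ∀ x ∉ closedBall x₀ r, φ x = x :=
  stmt3_general n ε r hε hε' hr x₀ T A hA η hη φ hφ
end

section
/- Let T and T_a be d-dimensional linear subspaces of ℝ^n, and let u₁, …, u_d be an orthonormal basis of T. Let p : ℝ^n → T_a be the orthogonal projection. Then the d-Jacobian of p restricted to T satisfies J_d(p|_T) = |p(u₁) ∧ ⋯ ∧ p(u_d)| ≤ (1 − ‖P_T − P_{T_a}‖²)^{1/2}, where P_T, P_{T_a} are the orthogonal projections onto T and T_a and ‖·‖ is the operator norm, provided u₁ is chosen to attain ‖P_T − P_{T_a}‖ = |P⊥_{T_a}(u₁)|. -/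
open Module Matrix

/-- The orthogonal projection onto `T`, as a continuous linear map `ℝⁿ → ℝⁿ`. -/
noncomputable def projCLM {n : ℕ} (T : Submodule ℝ (EuclideanSpace ℝ (Fin n))) :
    EuclideanSpace ℝ (Fin n) →L[ℝ] EuclideanSpace ℝ (Fin n) :=
  T.subtypeL.comp (Submodule.orthogonalProjection T)

/-- The norm `|w₁ ∧ ⋯ ∧ w_d|` of a wedge product, computed as the square root of the
Gram determinant. -/
noncomputable def wedgeNorm {n d : ℕ} (w : Fin d → EuclideanSpace ℝ (Fin n)) : ℝ :=
  Real.sqrt (Matrix.det (Matrix.of fun i j => (inner ℝ (w i) (w j) : ℝ)))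

/-!
Write `P` and `Q` for the orthogonal projections onto `T_a` and `T_aᗮ`. The Gram matrices `G` of
`(P uᵢ)` and `H` of `(Q uᵢ)` add up to the Gram matrix of the orthonormal `uᵢ`, the identity, so
`0 ≤ G ≤ 1` and the eigenvalues of `G` lie in `[0, 1]`. Hence `det G`, their product, is at most
the smallest of them, and so at most every diagonal entry of `G`; in particular
`det G ≤ G₁₁ = |P u₁|² = 1 - |Q u₁|² = 1 - ‖P_T - P_{T_a}‖²`.
-/

namespace Matrix

variable {ι : Type*} [Fintype ι] [DecidableEq ι] {A : Matrix ι ι ℝ}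

lemma IsHermitian.eigenvalues_le_one (hA : A.IsHermitian) (h1 : (1 - A).PosSemidef) (j : ι) :
    hA.eigenvalues j ≤ 1 := by
  have hv : star ⇑(hA.eigenvectorBasis j) ⬝ᵥ ⇑(hA.eigenvectorBasis j) = 1 := by
    rw [dotProduct_comm, ← EuclideanSpace.inner_eq_star_dotProduct, real_inner_self_eq_norm_sq,
      hA.eigenvectorBasis.orthonormal.1 j, one_pow]
  have hquad := h1.dotProduct_mulVec_nonneg (hA.eigenvectorBasis j)
  rw [sub_mulVec, one_mulVec, dotProduct_sub, hv] at hquad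
  have heig := hA.eigenvalues_eq j
  rw [RCLike.re_to_real] at heig
  linarith

lemma IsHermitian.apply_self_eq_sum_eigenvalues (hA : A.IsHermitian) (i : ι) :
    A i i = ∑ k, hA.eigenvectorBasis k i ^ 2 * hA.eigenvalues k := by
  conv_lhs => rw [hA.spectral_theorem]
  simp [Unitary.conjStarAlgAut_apply, mul_apply, diagonal_apply, sq, mul_right_comm]

lemma IsHermitian.sum_eigenvectorBasis_sq (hA : A.IsHermitian) (i : ι) :
    ∑ k, hA.eigenvectorBasis k i ^ 2 = 1 := by
  simpa [sq, EuclideanSpace.inner_single_left, EuclideanSpace.inner_single_right] using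
    hA.eigenvectorBasis.sum_inner_mul_inner (EuclideanSpace.single i 1) (EuclideanSpace.single i 1)

lemma PosSemidef.det_le_eigenvalues (hA : A.PosSemidef) (h1 : (1 - A).PosSemidef) (k : ι) :
    A.det ≤ hA.1.eigenvalues k := by
  rw [hA.1.det_eq_prod_eigenvalues]
  simpa using Finset.prod_le_prod_of_subset_of_le_one (Finset.subset_univ {k})
    (fun j _ => hA.eigenvalues_nonneg j) (fun j _ _ => hA.1.eigenvalues_le_one h1 j)

lemma PosSemidef.det_le_apply_self (hA : A.PosSemidef) (h1 : (1 - A).PosSemidef) (i : ι) :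
    A.det ≤ A i i :=
  calc A.det = ∑ k, hA.1.eigenvectorBasis k i ^ 2 * A.det := by
        rw [← Finset.sum_mul, hA.1.sum_eigenvectorBasis_sq, one_mul]
    _ ≤ ∑ k, hA.1.eigenvectorBasis k i ^ 2 * hA.1.eigenvalues k :=
        Finset.sum_le_sum fun k _ =>
          mul_le_mul_of_nonneg_left (hA.det_le_eigenvalues h1 k) (sq_nonneg _)
    _ = A i i := (hA.1.apply_self_eq_sum_eigenvalues i).symm

end Matrix

open scoped InnerProductSpace

namespace Submodule

variable {E ι : Type*} [NormedAddCommGroup E] [InnerProductSpace ℝ E]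
  (K : Submodule ℝ E) [K.HasOrthogonalProjection]

lemma inner_starProjection_add_inner_starProjection_orthogonal (x y : E) :
    ⟪K.starProjection x, K.starProjection y⟫_ℝ + ⟪Kᗮ.starProjection x, Kᗮ.starProjection y⟫_ℝ =
      ⟪x, y⟫_ℝ := by
  conv_rhs => rw [← K.starProjection_add_starProjection_orthogonal x,
    ← K.starProjection_add_starProjection_orthogonal y]
  have hPx := K.starProjection_apply_mem x
  have hPy := K.starProjection_apply_mem y
  have hQx := Kᗮ.starProjection_apply_mem x
  have hQy := Kᗮ.starProjection_apply_mem y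
  rw [inner_add_left, inner_add_right, inner_add_right, inner_right_of_mem_orthogonal hPx hQy,
    inner_left_of_mem_orthogonal hPy hQx]
  ring

lemma gram_starProjection_add_gram_starProjection_orthogonal (v : ι → E) :
    gram ℝ (fun i => K.starProjection (v i)) + gram ℝ (fun i => Kᗮ.starProjection (v i)) =
      gram ℝ v := by
  ext i j
  exact K.inner_starProjection_add_inner_starProjection_orthogonal (v i) (v j)

end Submodule

theorem stmt5_general (n d : ℕ) (hd : 0 < d)
    (T Ta : Submodule ℝ (EuclideanSpace ℝ (Fin n)))
    (u : Fin d → EuclideanSpace ℝ (Fin n))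
    (hu : Orthonormal ℝ u)
    (hattain : ‖projCLM T - projCLM Ta‖ = ‖projCLM Taᗮ (u ⟨0, hd⟩)‖) :
    wedgeNorm (fun i => projCLM Ta (u i)) ≤ Real.sqrt (1 - ‖projCLM T - projCLM Ta‖ ^ 2) := by
  set i₀ : Fin d := ⟨0, hd⟩
  set G := gram ℝ fun i => Ta.starProjection (u i)
  have hGH : G + gram ℝ (fun i => Taᗮ.starProjection (u i)) = 1 := by
    rw [Ta.gram_starProjection_add_gram_starProjection_orthogonal, gram_eq_one_iff_orthonormal]
    exact hu
  have hG_le_one : (1 - G).PosSemidef := by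
    rw [← hGH, add_sub_cancel_left]
    exact posSemidef_gram ℝ _
  have hdiag : G i₀ i₀ = 1 - ‖Taᗮ.starProjection (u i₀)‖ ^ 2 := by
    rw [← real_inner_self_eq_norm_sq, eq_sub_iff_add_eq]
    exact congrFun (congrFun hGH i₀) i₀
  rw [hattain]
  -- `projCLM K` unfolds to `K.starProjection`, and `wedgeNorm w` to `√(gram ℝ w).det`.
  change Real.sqrt G.det ≤ Real.sqrt (1 - ‖Taᗮ.starProjection (u i₀)‖ ^ 2)
  exact Real.sqrt_le_sqrt (((posSemidef_gram ℝ _).det_le_apply_self hG_le_one i₀).trans_eq hdiag)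

theorem stmt5 (n d : ℕ) (hd : 0 < d)
    (T Ta : Submodule ℝ (EuclideanSpace ℝ (Fin n)))
    (hT : finrank ℝ T = d) (hTa : finrank ℝ Ta = d)
    (u : Fin d → EuclideanSpace ℝ (Fin n))
    (hu : Orthonormal ℝ u) (huT : ∀ i, u i ∈ T)
    (hspan : Submodule.span ℝ (Set.range u) = T)
    (hattain : ‖projCLM T - projCLM Ta‖ = ‖projCLM Taᗮ (u ⟨0, hd⟩)‖) :
    wedgeNorm (fun i => projCLM Ta (u i)) ≤ Real.sqrt (1 - ‖projCLM T - projCLM Ta‖ ^ 2) :=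
  stmt5_general n d hd T Ta u hu hattain
end
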